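/- The code C is invariant under all affine coordinate permutations: for every u ∈ F_q^* and v ∈ F_q and every (a,b,c,h) ∈ F_{p^s} × F_q × F_q × F_p, there exist (a',b',c',h') ∈ F_{p^s} × F_q × F_q × F_p such that c(a',b',c',h')(x) = c(a,b,c,h)(ux + v) for all x ∈ F_q. -/
import Mathlib

/-- `trp p r z = z + z^p + ⋯ + z^(p^(r-1))`, the trace form used for `Tr_r`. -/
def trp (p r : ℕ) {F : Type} [Field F] (z : F) : F :=
  ∑ i ∈ Finset.range r, z ^ p ^ i

section helpers
variable {F : Type} [Field F] (p : ℕ) [Fact p.Prime] [CharP F p]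

lemma trp_add (r : ℕ) (x y : F) : trp p r (x + y) = trp p r x + trp p r y := by
  unfold trp
  rw [← Finset.sum_add_distrib]
  exact Finset.sum_congr rfl fun i _ => by rw [add_pow_char_pow]

lemma trp_pow_p (r : ℕ) (z : F) : (trp p r z) ^ p = trp p r (z ^ p) := by
  unfold trp
  rw [sum_pow_char]
  exact Finset.sum_congr rfl fun i _ => by
    rw [← pow_mul, ← pow_mul, mul_comm]

lemma trp_frob (r : ℕ) (z : F) (hz : z ^ p ^ r = z) : trp p r (z ^ p) = trp p r z := by
  unfold trp
  have key : ∑ i ∈ Finset.range r, (z ^ p) ^ p ^ i = ∑ i ∈ Finset.range r, z ^ p ^ (i + 1) :=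
    Finset.sum_congr rfl fun i _ => by rw [← pow_mul, ← pow_succ']
  have h1 : (∑ i ∈ Finset.range r, z ^ p ^ (i + 1)) + z ^ p ^ 0
      = ∑ i ∈ Finset.range (r + 1), z ^ p ^ i :=
    (Finset.sum_range_succ' (fun i => z ^ p ^ i) r).symm
  have h2 : ∑ i ∈ Finset.range (r + 1), z ^ p ^ i
      = (∑ i ∈ Finset.range r, z ^ p ^ i) + z ^ p ^ r := Finset.sum_range_succ _ r
  rw [key]
  have := h1.trans h2
  rw [hz, pow_zero, pow_one] at this
  exact add_right_cancel this

lemma trp_frob_pow (r k : ℕ) (z : F) (hz : ∀ y : F, y ^ p ^ r = y) :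
    trp p r (z ^ p ^ k) = trp p r z := by
  induction k with
  | zero => rw [pow_zero, pow_one]
  | succ n ih =>
      rw [pow_succ, pow_mul, trp_frob p r _ (hz _), ih]

omit [Fact (Nat.Prime p)] [CharP F p] in
lemma trp_split (s : ℕ) (z : F) : trp p (2 * s) z = trp p s z + trp p s (z ^ p ^ s) := by
  unfold trp
  rw [two_mul, Finset.sum_range_add]
  congr 1
  exact Finset.sum_congr rfl fun i _ => by rw [← pow_mul, ← pow_add]

lemma exists_zmod [Fintype F] (t : F) (ht : t ^ p = t) :
    ∃ h : ZMod p, (ZMod.cast h : F) = t := by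
  classical
  set φ := ZMod.castHom (dvd_refl p) F with hφ
  have hinj : Function.Injective φ := ZMod.castHom_injective F
  by_contra hcon
  push_neg at hcon
  have hroot : ∀ k : ZMod p, (φ k) ^ p = φ k := fun k => by
    rw [← map_pow, ZMod.pow_card]
  set f : Polynomial F := Polynomial.X ^ p - Polynomial.X with hf
  have hp2 : 2 ≤ p := (Fact.out : p.Prime).two_le
  have hdeg : f.natDegree = p := by
    rw [hf]
    have h1 : (Polynomial.X : Polynomial F).natDegree
        < (Polynomial.X ^ p : Polynomial F).natDegree := by
      rw [Polynomial.natDegree_X_pow, Polynomial.natDegree_X]; omega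
    rw [Polynomial.natDegree_sub_eq_left_of_natDegree_lt h1, Polynomial.natDegree_X_pow]
  have hfne : f ≠ 0 := fun h0 => by
    rw [h0, Polynomial.natDegree_zero] at hdeg; omega
  have hmem : ∀ x : F, x ^ p = x → x ∈ f.roots := by
    intro x hx
    rw [Polynomial.mem_roots hfne]
    simp [hf, Polynomial.IsRoot, hx]
  have hsub : insert t (Finset.univ.image (fun k : ZMod p => φ k)) ⊆ f.roots.toFinset := by
    intro x hx
    rw [Finset.mem_insert] at hx
    rcases hx with rfl | hx
    · exact Multiset.mem_toFinset.2 (hmem _ ht)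
    · obtain ⟨k, _, rfl⟩ := Finset.mem_image.1 hx
      exact Multiset.mem_toFinset.2 (hmem _ (hroot k))
  have hcard1 : (Finset.univ.image (fun k : ZMod p => φ k)).card = p := by
    rw [Finset.card_image_of_injective _ hinj, Finset.card_univ, ZMod.card]
  have htni : t ∉ Finset.univ.image (fun k : ZMod p => φ k) := by
    intro hmem'
    obtain ⟨k, _, hk⟩ := Finset.mem_image.1 hmem'
    exact hcon k (by simpa [φ, ZMod.castHom_apply] using hk)
  have hcard2 : p + 1 ≤ f.roots.toFinset.card := by
    have := Finset.card_le_card hsub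
    rwa [Finset.card_insert_of_notMem htni, hcard1] at this
  have hcard3 : f.roots.toFinset.card ≤ p := by
    calc f.roots.toFinset.card ≤ Multiset.card f.roots := f.roots.toFinset_card_le
      _ ≤ f.natDegree := f.card_roots'
      _ = p := hdeg
  omega

end helpers

/-- The codeword `c(a,b,c,h)` of the code `C`, viewed as a function on `F_q = F`;
its value at `x` is `Tr_s(a x^(p^s+1)) + Tr_m(b x^(p^l+1) + c x) + h` (the values
lie in the prime field `F_p ⊆ F`). Here `m = 2s`. -/
def cword (p s l : ℕ) {F : Type} [Field F] (a b c : F) (h : ZMod p) : F → F :=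
  fun x => trp p s (a * x ^ (p ^ s + 1)) + trp p (2 * s) (b * x ^ (p ^ l + 1) + c * x)
    + ZMod.cast h

/-- The support of the codeword `c(a,b,c,h)`; its cardinality is the Hamming weight. -/
def suppw (p s l : ℕ) {F : Type} [Field F] [Fintype F] [DecidableEq F]
    (a b c : F) (h : ZMod p) : Finset F :=
  Finset.univ.filter fun x => cword p s l a b c h x ≠ 0

theorem stmt1 (p s l : ℕ) [Fact p.Prime] (F : Type) [Field F] [Fintype F] [DecidableEq F]
    [CharP F p] (hodd : Odd p) (hs : 2 ≤ s) (hl1 : 1 ≤ l) (hls : l ≠ s)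
    (hl2 : l ≤ 2 * s - 1) (hF : Fintype.card F = p ^ (2 * s)) :
    ∀ u v : F, u ≠ 0 → ∀ a b c : F, ∀ h : ZMod p, a ^ p ^ s = a →
      ∃ a' b' c' : F, ∃ h' : ZMod p, a' ^ p ^ s = a' ∧
        ∀ x : F, cword p s l a' b' c' h' x = cword p s l a b c h (u * x + v) := by
  intro u v hu a b c h ha
  have hm : ∀ y : F, y ^ p ^ (2 * s) = y := fun y => by
    rw [← hF]; exact FiniteField.pow_card y
  have hss : ∀ y : F, (y ^ p ^ s) ^ p ^ s = y := fun y => by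
    rw [← pow_mul, ← pow_add, ← two_mul]; exact hm y
  have hc1 : (a * v ^ (p ^ s + 1)) ^ p ^ s = a * v ^ (p ^ s + 1) := by
    rw [pow_succ, mul_pow, mul_pow, ha, hss v]
    ring
  have htfix : ∀ z : F, (trp p (2 * s) z) ^ p = trp p (2 * s) z := fun z => by
    rw [trp_pow_p, trp_frob p (2 * s) z (hm z)]
  have hsfix : ∀ z : F, z ^ p ^ s = z → (trp p s z) ^ p = trp p s z := fun z hz => by
    rw [trp_pow_p, trp_frob p s z hz]
  have ht : (trp p s (a * v ^ (p ^ s + 1)) + trp p (2 * s) (b * v ^ (p ^ l + 1) + c * v)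
      + (ZMod.cast h : F)) ^ p = trp p s (a * v ^ (p ^ s + 1))
      + trp p (2 * s) (b * v ^ (p ^ l + 1) + c * v) + (ZMod.cast h : F) := by
    rw [add_pow_char, add_pow_char, hsfix _ hc1, htfix]
    congr 1
    rw [show (ZMod.cast h : F) = ZMod.castHom (dvd_refl p) F h from rfl, ← map_pow,
      ZMod.pow_card]
  obtain ⟨h', hh'⟩ := exists_zmod p _ ht
  refine ⟨a * u ^ (p ^ s + 1), b * u ^ (p ^ l + 1),
    a * u * v ^ p ^ s + (b * u ^ p ^ l * v) ^ p ^ (2 * s - l) + b * u * v ^ p ^ l + c * u,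
    h', ?_, ?_⟩
  · rw [pow_succ, mul_pow, mul_pow, ha, hss u]
    ring
  intro x
  unfold cword
  rw [hh']
  set W : F := a * u * v ^ p ^ s * x with hW
  set D : F := (b * u ^ p ^ l * v) ^ p ^ (2 * s - l) with hD
  have hWs : W ^ p ^ s = a * u ^ p ^ s * v * x ^ p ^ s := by
    rw [hW, mul_pow, mul_pow, mul_pow, ha, hss v]
  have e1 : a * (u * x + v) ^ (p ^ s + 1)
      = a * u ^ (p ^ s + 1) * x ^ (p ^ s + 1) + (W + W ^ p ^ s) + a * v ^ (p ^ s + 1) := by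
    rw [hWs, pow_succ, add_pow_char_pow, mul_pow, pow_succ, pow_succ]
    ring
  have e2 : b * (u * x + v) ^ (p ^ l + 1) + c * (u * x + v)
      = b * u ^ (p ^ l + 1) * x ^ (p ^ l + 1) + b * u ^ p ^ l * v * x ^ p ^ l
        + b * u * v ^ p ^ l * x + c * u * x + (b * v ^ (p ^ l + 1) + c * v) := by
    rw [pow_succ, add_pow_char_pow, mul_pow, pow_succ, pow_succ]
    ring
  have hDx : (b * u ^ p ^ l * v * x ^ p ^ l) ^ p ^ (2 * s - l) = D * x := by
    rw [mul_pow, hD, ← pow_mul, ← pow_add]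
    have hl2s : l + (2 * s - l) = 2 * s := by omega
    rw [hl2s, hm x]
  have e3 : trp p (2 * s) (b * u ^ p ^ l * v * x ^ p ^ l) = trp p (2 * s) (D * x) := by
    rw [← hDx, trp_frob_pow p (2 * s) _ _ hm]
  have e4 : trp p s (W + W ^ p ^ s) = trp p (2 * s) W := by
    rw [trp_add, ← trp_split]
  have R1 : trp p s (a * (u * x + v) ^ (p ^ s + 1))
      = trp p s (a * u ^ (p ^ s + 1) * x ^ (p ^ s + 1)) + trp p (2 * s) W
        + trp p s (a * v ^ (p ^ s + 1)) := by
    rw [e1, trp_add, trp_add, e4]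
  have R2 : trp p (2 * s) (b * (u * x + v) ^ (p ^ l + 1) + c * (u * x + v))
      = trp p (2 * s) (b * u ^ (p ^ l + 1) * x ^ (p ^ l + 1)) + trp p (2 * s) (D * x)
        + trp p (2 * s) (b * u * v ^ p ^ l * x) + trp p (2 * s) (c * u * x)
        + trp p (2 * s) (b * v ^ (p ^ l + 1) + c * v) := by
    rw [e2, trp_add, trp_add, trp_add, trp_add, e3]
  have L1 : trp p (2 * s) (b * u ^ (p ^ l + 1) * x ^ (p ^ l + 1)
        + (a * u * v ^ p ^ s + D + b * u * v ^ p ^ l + c * u) * x)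
      = trp p (2 * s) (b * u ^ (p ^ l + 1) * x ^ (p ^ l + 1)) + trp p (2 * s) W
        + trp p (2 * s) (D * x) + trp p (2 * s) (b * u * v ^ p ^ l * x)
        + trp p (2 * s) (c * u * x) := by
    have e0 : b * u ^ (p ^ l + 1) * x ^ (p ^ l + 1)
        + (a * u * v ^ p ^ s + D + b * u * v ^ p ^ l + c * u) * x
        = b * u ^ (p ^ l + 1) * x ^ (p ^ l + 1) + W + D * x + b * u * v ^ p ^ l * x
          + c * u * x := by
      rw [hW]; ring
    rw [e0, trp_add, trp_add, trp_add, trp_add]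
  rw [L1, R1, R2]
  ring
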